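/- arXiv:2403.14785 — 4 statements merged into one kernel-verified Lean document; each statement's English description precedes it below -/
import Mathlib

section
/- For every vector w ∈ ℝ³, the 2×2 complex matrices (‖w‖·I ± w·σ)/2 are positive semidefinite, where w·σ = w_1 σ_x + w_2 σ_y + w_3 σ_z is the Pauli combination. Consequently, for unbiased qubit measurement vectors m_1,...,m_N with w_a = Σ_k (-1)^{a_k} m_k and p(a) = ‖w_a‖ / Σ_b ‖w_b‖, the operators E_{±,a} = (p(a)·I ± w_a·σ / Σ_b ‖w_b‖)/2 are positive semidefinite and satisfy Σ_{±,a} E_{±,a} = I, i.e., they form a POVM. -/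
/-!
`w·σ` is Hermitian with `(w·σ)² = ‖w‖² I`, so `A = ‖w‖ I + w·σ` satisfies `A² = 2‖w‖ A`, i.e.
`A = (2‖w‖)⁻¹ Aᴴ A` is positive semidefinite (and `A = 0` when `w = 0`); replacing `w` by `-w`
handles `‖w‖ I - w·σ`. Each `E_{±,a}` is a nonnegative multiple of one of these, and
`E_{+,a} + E_{-,a} = p(a) I` with `∑ₐ p(a) = 1`.
-/

open scoped Matrix ComplexOrder

/-- The three Pauli matrices `σ_x, σ_y, σ_z`. -/
noncomputable def pauli : Fin 3 → Matrix (Fin 2) (Fin 2) ℂ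
  | 0 => !![0, 1; 1, 0]
  | 1 => !![0, -Complex.I; Complex.I, 0]
  | 2 => !![1, 0; 0, -1]

/-- The Pauli combination `w·σ = w₁σ_x + w₂σ_y + w₃σ_z` of a real 3-vector. -/
noncomputable def pauliDot (w : EuclideanSpace ℝ (Fin 3)) : Matrix (Fin 2) (Fin 2) ℂ :=
  ∑ i : Fin 3, (w i : ℂ) • pauli i

theorem Matrix.IsHermitian.posSemidef_of_mul_self_eq_smul {𝕜 n : Type*} [RCLike 𝕜] [Fintype n]
    {A : Matrix n n 𝕜} (hA : A.IsHermitian) {c : ℝ} (hc : 0 < c) (h : A * A = c • A) :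
    A.PosSemidef := by
  have hA' : A = c⁻¹ • (Aᴴ * A) := by
    rw [hA.eq, h, smul_smul, inv_mul_cancel₀ hc.ne', one_smul]
  rw [hA']
  exact (posSemidef_conjTranspose_mul_self A).smul (inv_nonneg.2 hc.le)

theorem pauliDot_eq (u : EuclideanSpace ℝ (Fin 3)) :
    pauliDot u = !![(u 2 : ℂ), u 0 - u 1 * Complex.I; u 0 + u 1 * Complex.I, -(u 2 : ℂ)] := by
  ext i j
  fin_cases i <;> fin_cases j <;>
    simp [pauliDot, pauli, Fin.sum_univ_three, sub_eq_add_neg, mul_comm]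

theorem isHermitian_pauliDot (u : EuclideanSpace ℝ (Fin 3)) : (pauliDot u).IsHermitian := by
  rw [pauliDot_eq]
  ext i j
  fin_cases i <;> fin_cases j <;> simp [Complex.ext_iff]

theorem pauliDot_neg (u : EuclideanSpace ℝ (Fin 3)) : pauliDot (-u) = -pauliDot u := by
  simp [pauliDot, Finset.sum_neg_distrib]

theorem pauliDot_mul_self (u : EuclideanSpace ℝ (Fin 3)) :
    pauliDot u * pauliDot u = ((‖u‖ ^ 2 : ℝ) : ℂ) • 1 := by
  have hnorm : ‖u‖ ^ 2 = u 0 ^ 2 + u 1 ^ 2 + u 2 ^ 2 := by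
    simp [EuclideanSpace.norm_sq_eq, Fin.sum_univ_three]
  rw [hnorm, pauliDot_eq]
  ext i j
  fin_cases i <;> fin_cases j <;> simp [Matrix.mul_apply, Fin.sum_univ_two] <;> ring_nf <;>
    simp [Complex.I_sq]

theorem posSemidef_norm_smul_one_add_pauliDot (u : EuclideanSpace ℝ (Fin 3)) :
    (((‖u‖ : ℝ) : ℂ) • (1 : Matrix (Fin 2) (Fin 2) ℂ) + pauliDot u).PosSemidef := by
  rcases (norm_nonneg u).eq_or_lt with hu | hu
  · simp [norm_eq_zero.1 hu.symm, pauliDot, Matrix.PosSemidef.zero]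
  · refine Matrix.IsHermitian.posSemidef_of_mul_self_eq_smul ?_ (by positivity : 0 < 2 * ‖u‖) ?_
    · exact .add (by simp [Matrix.IsHermitian, Matrix.conjTranspose_smul]) (isHermitian_pauliDot u)
    · simp only [add_mul, mul_add, smul_mul_assoc, mul_smul_comm, one_mul, mul_one,
        pauliDot_mul_self]
      push_cast
      module

theorem posSemidef_norm_smul_one_sub_pauliDot (u : EuclideanSpace ℝ (Fin 3)) :
    (((‖u‖ : ℝ) : ℂ) • (1 : Matrix (Fin 2) (Fin 2) ℂ) - pauliDot u).PosSemidef := by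
  simpa [sub_eq_add_neg, pauliDot_neg] using posSemidef_norm_smul_one_add_pauliDot (-u)

theorem posSemidef_half_smul_norm_div_add_sign_pauliDot (u : EuclideanSpace ℝ (Fin 3))
    {S : ℝ} (hS : 0 < S) (s : Bool) :
    ((1 / 2 : ℂ) • (((‖u‖ / S : ℝ) : ℂ) • (1 : Matrix (Fin 2) (Fin 2) ℂ)
      + ((if s then 1 else -1) / (S : ℂ)) • pauliDot u)).PosSemidef := by
  have hscale : (0 : ℂ) ≤ 1 / 2 / S := by
    rw [Complex.nonneg_iff]
    norm_num [Complex.div_re, Complex.div_im]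
    positivity
  cases s
  · convert (posSemidef_norm_smul_one_sub_pauliDot u).smul hscale using 1
    simp only [Bool.false_eq_true, ↓reduceIte]
    push_cast
    module
  · convert (posSemidef_norm_smul_one_add_pauliDot u).smul hscale using 1
    simp only [↓reduceIte]
    push_cast
    module

theorem pauli_halves_posSemidef_and_parent_POVM_general
    (N : ℕ)
    (w : (Fin N → Bool) → EuclideanSpace ℝ (Fin 3))
    (S : ℝ) (hS : S = ∑ a : Fin N → Bool, ‖w a‖) (hSpos : 0 < S)
    (E : Bool × (Fin N → Bool) → Matrix (Fin 2) (Fin 2) ℂ)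
    (hE : ∀ sa, E sa = (1 / 2 : ℂ) •
        (((‖w sa.2‖ / S : ℝ) : ℂ) • (1 : Matrix (Fin 2) (Fin 2) ℂ)
          + ((if sa.1 then 1 else -1) / (S : ℂ)) • pauliDot (w sa.2))) :
    (∀ u : EuclideanSpace ℝ (Fin 3),
        (((1 : ℝ) / 2 : ℂ) • (((‖u‖ : ℝ) : ℂ) • (1 : Matrix (Fin 2) (Fin 2) ℂ)
            + pauliDot u)).PosSemidef ∧
        (((1 : ℝ) / 2 : ℂ) • (((‖u‖ : ℝ) : ℂ) • (1 : Matrix (Fin 2) (Fin 2) ℂ)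
            - pauliDot u)).PosSemidef) ∧
    (∀ sa, (E sa).PosSemidef) ∧
    (∑ sa : Bool × (Fin N → Bool), E sa = 1) := by
  have half_nonneg : (0 : ℂ) ≤ ((1 : ℝ) / 2 : ℂ) := by
    rw [Complex.nonneg_iff]
    norm_num
  refine ⟨fun u => ⟨?_, ?_⟩, fun sa => ?_, ?_⟩
  · exact (posSemidef_norm_smul_one_add_pauliDot u).smul half_nonneg
  · exact (posSemidef_norm_smul_one_sub_pauliDot u).smul half_nonneg
  · exact hE sa ▸ posSemidef_half_smul_norm_div_add_sign_pauliDot _ hSpos _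
  · have hpair : ∀ a, E (true, a) + E (false, a) = ((‖w a‖ / S : ℝ) : ℂ) • 1 := by
      intro a
      rw [hE, hE]
      simp only [↓reduceIte, Bool.false_eq_true]
      push_cast
      module
    have hprob : ∑ a : Fin N → Bool, ‖w a‖ / S = 1 := by
      rw [← Finset.sum_div, ← hS, div_self hSpos.ne']
    rw [Fintype.sum_prod_type, Fintype.sum_bool, ← Finset.sum_add_distrib]
    simp only [hpair, ← Finset.sum_smul, ← Complex.ofReal_sum, hprob, Complex.ofReal_one,
      one_smul]

/-- For every `w ∈ ℝ³` the matrices `(‖w‖·I ± w·σ)/2` are positive semidefinite; and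
for vectors `m₁,...,m_N` with `w_a = ∑_k (-1)^{a_k} m_k`, `S = ∑_b ‖w_b‖ > 0` and
`p(a) = ‖w_a‖/S`, the operators `E_{±,a} = (p(a)·I ± w_a·σ/S)/2` are positive
semidefinite and sum to the identity, i.e. they form a POVM. -/
theorem pauli_halves_posSemidef_and_parent_POVM
    (N : ℕ) (m : Fin N → EuclideanSpace ℝ (Fin 3))
    (w : (Fin N → Bool) → EuclideanSpace ℝ (Fin 3))
    (hw : ∀ a, w a = ∑ k : Fin N, (if a k then (-1 : ℝ) else 1) • m k)
    (S : ℝ) (hS : S = ∑ a : Fin N → Bool, ‖w a‖) (hSpos : 0 < S)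
    (E : Bool × (Fin N → Bool) → Matrix (Fin 2) (Fin 2) ℂ)
    (hE : ∀ sa, E sa = (1 / 2 : ℂ) •
        (((‖w sa.2‖ / S : ℝ) : ℂ) • (1 : Matrix (Fin 2) (Fin 2) ℂ)
          + ((if sa.1 then 1 else -1) / (S : ℂ)) • pauliDot (w sa.2))) :
    (∀ u : EuclideanSpace ℝ (Fin 3),
        (((1 : ℝ) / 2 : ℂ) • (((‖u‖ : ℝ) : ℂ) • (1 : Matrix (Fin 2) (Fin 2) ℂ)
            + pauliDot u)).PosSemidef ∧
        (((1 : ℝ) / 2 : ℂ) • (((‖u‖ : ℝ) : ℂ) • (1 : Matrix (Fin 2) (Fin 2) ℂ)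
            - pauliDot u)).PosSemidef) ∧
    (∀ sa, (E sa).PosSemidef) ∧
    (∑ sa : Bool × (Fin N → Bool), E sa = 1) :=
  pauli_halves_posSemidef_and_parent_POVM_general N w S hS hSpos E hE
end

section
/- Let 0 < η ≤ 1, 0 ≤ v ≤ 1, d ≥ 1, K ≥ 1. The system of equations p(1 - η*v*) = 1 - ηv and p(1 - η*) = 1 - η, together with the saturation condition η* = d/((K+1)(v*(d+1)-1)), has the solution p = (K+1)/K · (η(1-v) + d(1-ηv))/d (when all quantities lie in their admissible ranges). -/
/-- Convex-combination attack parameter for dimension `d` and `K` key measurements: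
the system `p(1-η*v*) = 1-ηv`, `p(1-η*) = 1-η` with the saturation
`η* = d/((K+1)(v*(d+1)-1))` has solution `p = (K+1)/K · (η(1-v)+d(1-ηv))/d`. -/
theorem attack_parameter_dim_d (η v p ηs vs : ℝ) (d K : ℕ)
    (hη0 : 0 < η) (hη1 : η ≤ 1) (hv0 : 0 ≤ v) (hv1 : v ≤ 1)
    (hd : 1 ≤ d) (hK : 1 ≤ K)
    (hadm : 0 < vs * (d + 1) - 1)
    (heq1 : p * (1 - ηs * vs) = 1 - η * v)
    (heq2 : p * (1 - ηs) = 1 - η)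
    (hsat : ηs = d / ((K + 1) * (vs * (d + 1) - 1))) :
    p = (K + 1) / K * ((η * (1 - v) + d * (1 - η * v)) / d) := by
  have hd' : (0:ℝ) < d := by exact_mod_cast hd
  have hK' : (0:ℝ) < K := by exact_mod_cast hK
  have hA : ((K:ℝ) + 1) * (vs * (d + 1) - 1) ≠ 0 := by positivity
  subst hsat
  field_simp at heq1 heq2 ⊢
  nlinarith [sq_nonneg p, sq_nonneg vs, heq1, heq2, mul_pos hd' hK']
end

section
/- Let 0 < η ≤ 1 and 0 ≤ v ≤ 1 with η(1+v) ≤ 2. The system p(1 - η*v*) = 1 - ηv, p(1 - η*) = 1 - η, together with η* = 2(1 - v*), has the solution p = 1 - ηv + √(η(1-v)(2 - η(1+v))). -/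
/-- Convex-combination attack parameter for the set of all noisy-lossy qubit projective
measurements: the system `p(1-η*v*) = 1-ηv`, `p(1-η*) = 1-η` with `η* = 2(1-v*)`
has the solution `p = 1 - ηv + √(η(1-v)(2-η(1+v)))`. -/
theorem attack_parameter_all_pvms (η v p ηs vs : ℝ)
    (hη0 : 0 < η) (hη1 : η ≤ 1) (hv0 : 0 ≤ v) (hv1 : v ≤ 1)
    (hadm : η * (1 + v) ≤ 2) (hp : 0 ≤ p) (hηs : 0 ≤ ηs)
    (heq1 : p * (1 - ηs * vs) = 1 - η * v)
    (heq2 : p * (1 - ηs) = 1 - η)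
    (hsat : ηs = 2 * (1 - vs)) :
    p = 1 - η * v + Real.sqrt (η * (1 - v) * (2 - η * (1 + v))) := by
  have key : p * ηs ^ 2 = 2 * (η * (1 - v)) := by
    linear_combination 2 * heq1 - 2 * heq2 + p * ηs * hsat
  have hD0 : 0 ≤ η * (1 - v) * (2 - η * (1 + v)) :=
    mul_nonneg (mul_nonneg hη0.le (by linarith)) (by linarith)
  set s := Real.sqrt (η * (1 - v) * (2 - η * (1 + v))) with hs
  have hsnn : 0 ≤ s := Real.sqrt_nonneg _
  have hs2 : s ^ 2 = η * (1 - v) * (2 - η * (1 + v)) := Real.sq_sqrt hD0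
  have hquad : (p - (1 - η * v)) ^ 2 = s ^ 2 := by
    rw [hs2]; linear_combination (p - (1 - η) + p * ηs) * heq2 + p * key
  have hpe : p * ηs = p - (1 - η) := by linear_combination -heq2
  have hpηs : 0 ≤ p * ηs := mul_nonneg hp hηs
  have hfac : (p - (1 - η * v) - s) * (p - (1 - η * v) + s) = 0 := by
    linear_combination hquad
  rcases mul_eq_zero.mp hfac with h | h
  · linarith
  · -- minus-root case: p = 1 - ηv - s
    have hsa : s ≤ η * (1 - v) := by nlinarith
    have hsa' : s = η * (1 - v) := by nlinarith [hs2, hsnn]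
    have hp0 : p * ηs = 0 := by nlinarith
    rcases mul_eq_zero.mp hp0 with h0 | h0
    · -- p = 0, forces η = 1, v = 1, s = 0
      have hη : η = 1 := by
        have := heq2; rw [h0] at this; simp at this; linarith
      have hv : η * v = 1 := by
        have := heq1; rw [h0] at this; simp at this; linarith
      have : s = 0 := by nlinarith
      linarith
    · -- ηs = 0, forces s = 0
      have : p = 1 - η * v := by
        have := heq1; rw [h0] at this; simpa using this
      linarith
end

section
/- Fix ε ∈ [0,2) and an integer N ≥ 1, and set G = 1/(1 - ε/2) and η = G/N = 1/(N(1-ε/2)). Then √(G/N) = √η and (G - 1)/N + (N-1)/N = 1 - η + εη; i.e., the Gaussian channel obtained by composing an amplifier with scaling matrix √G·I and noise matrix (G-1)·I with a symmetric N-port beam-splitter marginal (scaling √(1/N)·I, noise ((N-1)/N)·I) has the same scaling and noise matrices as the thermal-noise channel with transmittance η and excess noise ε. -/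
/-- For `ε ∈ [0,2)`, `N ≥ 1`, `G = 1/(1-ε/2)` and `η = G/N`: `√(G/N) = √η` and
`(G-1)/N + (N-1)/N = 1 - η + εη`, i.e. the amplify-then-split Gaussian channel has the
same scaling and noise matrices as the thermal-noise channel with transmittance `η`
and excess noise `ε`. -/
theorem amplifier_beamsplitter_matches_thermal (ε : ℝ) (hε0 : 0 ≤ ε) (hε2 : ε < 2)
    (N : ℕ) (hN : 1 ≤ N) (G η : ℝ) (hG : G = 1 / (1 - ε / 2)) (hη : η = G / N) :
    Real.sqrt (G / N) = Real.sqrt η ∧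
      (G - 1) / N + ((N : ℝ) - 1) / N = 1 - η + ε * η := by
  have hNne : (N : ℝ) ≠ 0 := by positivity
  have hden : (1 - ε / 2) ≠ 0 := by linarith
  have h2e : (2 - ε) ≠ 0 := by linarith
  subst hG hη
  refine ⟨rfl, ?_⟩
  have hGval : 1 / (1 - ε / 2) = 2 / (2 - ε) := by
    rw [div_eq_div_iff hden h2e]; ring
  rw [hGval]
  field_simp
  ring
end
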